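/- (Theorem 1, primal LP characterization of PoA.) Suppose f_j(1) > 0 for every j ∈ {1,…,k}. Then the primal LP value W* is finite and PoA(f,w,𝓒,𝓝) = 1/W*. -/

import Mathlib

open Finset

noncomputable section

/-- A resource allocation game with `n` agents: resources `Fin m`, nonnegative
resource values `v`, and nonempty finite action sets consisting of subsets of resources. -/
structure RAGame (n : ℕ) where
  m : ℕ
  v : Fin m → ℝ
  v_nonneg : ∀ r, 0 ≤ v r
  act : Fin n → Finset (Finset (Fin m))
  act_nonempty : ∀ i, (act i).Nonempty

namespace RAGame

variable {n : ℕ}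

/-- the number of agents in `S` selecting resource `r` at profile `a` -/
def cnt (G : RAGame n) (a : Fin n → Finset (Fin G.m)) (S : Finset (Fin n)) (r : Fin G.m) : ℕ :=
  (S.filter fun i => r ∈ a i).card

/-- `a` is an action profile of the game -/
def IsProfile (G : RAGame n) (a : Fin n → Finset (Fin G.m)) : Prop := ∀ i, a i ∈ G.act i

/-- the welfare `W(a) = ∑ r, v r * w (|a|_r)` -/
def welf (G : RAGame n) (w : ℕ → ℝ) (a : Fin n → Finset (Fin G.m)) : ℝ :=
  ∑ r, G.v r * w (G.cnt a Finset.univ r)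

end RAGame

/-- a basis function: `w 0 = 0` and `w j > 0` for `1 ≤ j ≤ n` -/
def IsBasis (n : ℕ) (w : ℕ → ℝ) : Prop :=
  w 0 = 0 ∧ ∀ j, 1 ≤ j → j ≤ n → 0 < w j

/-- An information network on `n` agents partitioned into `k` (nonempty) classes, namely
the fibers of `cls` (`cls` surjective says every class is nonempty), where each agent of
class `j` observes exactly the agents in `Nb j`;  `Nb j` contains the class `j` itself
and is a union of classes. -/
structure Network (n k : ℕ) where
  cls : Fin n → Fin k
  Nb : Fin k → Finset (Fin n)
  cls_surj : Function.Surjective cls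
  mem_Nb : ∀ i, i ∈ Nb (cls i)
  Nb_union : ∀ (j : Fin k) (i i' : Fin n), cls i = cls i' → i ∈ Nb j → i' ∈ Nb j

namespace Network

variable {n k : ℕ}

/-- the class `𝓒_j` as a finset of agents -/
def classSet (net : Network n k) (j : Fin k) : Finset (Fin n) :=
  Finset.univ.filter fun i => net.cls i = j

/-- `κ j = |𝓒_j|` -/
def κ (net : Network n k) (j : Fin k) : ℕ := (net.classSet j).card

end Network

/-- `f` is a utility mechanism for the network: `f_j 0 = f_j (|𝓝_j|+1) = 0` -/
def IsMech {n k : ℕ} (net : Network n k) (f : Fin k → ℕ → ℝ) : Prop :=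
  ∀ j, f j 0 = 0 ∧ f j ((net.Nb j).card + 1) = 0

namespace RAGame

variable {n k : ℕ}

/-- the utility `U_i(a) = ∑_{r ∈ a i} v r * f_{cls i} (|a|_r^{𝓝_{cls i}})` -/
def util (G : RAGame n) (net : Network n k) (f : Fin k → ℕ → ℝ)
    (a : Fin n → Finset (Fin G.m)) (i : Fin n) : ℝ :=
  ∑ r ∈ a i, G.v r * f (net.cls i) (G.cnt a (net.Nb (net.cls i)) r)

/-- `a` is a pure Nash equilibrium -/
def IsNash (G : RAGame n) (net : Network n k) (f : Fin k → ℕ → ℝ)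
    (a : Fin n → Finset (Fin G.m)) : Prop :=
  G.IsProfile a ∧ ∀ (i : Fin n), ∀ b ∈ G.act i,
    G.util net f (Function.update a i b) i ≤ G.util net f a i

end RAGame

/-- the defining condition of the class `𝓖`: some profile has positive welfare -/
def GoodGame {n : ℕ} (G : RAGame n) (w : ℕ → ℝ) : Prop :=
  ∃ a, G.IsProfile a ∧ 0 < G.welf w a

/-- (worst pure-equilibrium welfare) / (best welfare) of a single game -/
def gameRatio {n k : ℕ} (G : RAGame n) (w : ℕ → ℝ) (net : Network n k)
    (f : Fin k → ℕ → ℝ) : ℝ :=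
  sInf {x | ∃ a, G.IsNash net f a ∧ x = G.welf w a} /
    sSup {x | ∃ a, G.IsProfile a ∧ x = G.welf w a}

/-- the price of anarchy `PoA(f, w, 𝓒, 𝓝)` -/
def PoA (n : ℕ) {k : ℕ} (w : ℕ → ℝ) (net : Network n k) (f : Fin k → ℕ → ℝ) : ℝ :=
  sInf {q | ∃ G : RAGame n, GoodGame G w ∧ (∃ a, G.IsNash net f a) ∧
    q = gameRatio G w net f}

/-- index tuples `t = ((a_j, x_j, b_j))_{j ∈ [k]}` (components of size at most `n`) -/
abbrev Idx (n k : ℕ) := Fin k → Fin (n + 1) × Fin (n + 1) × Fin (n + 1)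

section IdxDefs

variable {n k : ℕ}

def aI (t : Idx n k) (j : Fin k) : ℕ := ((t j).1 : ℕ)
def xI (t : Idx n k) (j : Fin k) : ℕ := ((t j).2.1 : ℕ)
def bI (t : Idx n k) (j : Fin k) : ℕ := ((t j).2.2 : ℕ)

/-- `A_t = ∑_j (a_j + x_j)` -/
def AtI (t : Idx n k) : ℕ := ∑ j, (aI t j + xI t j)

/-- `B_t = ∑_j (b_j + x_j)` -/
def BtI (t : Idx n k) : ℕ := ∑ j, (bI t j + xI t j)

/-- `A_{t,j} = ∑_{l : 𝓒_l ⊆ 𝓝_j} (a_l + x_l)` -/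
def Atj (net : Network n k) (t : Idx n k) (j : Fin k) : ℕ :=
  ∑ l ∈ Finset.univ.filter (fun l => net.classSet l ⊆ net.Nb j), (aI t l + xI t l)

end IdxDefs

/-- the index set `𝓘` -/
def Iset (n k : ℕ) (κ : Fin k → ℕ) : Finset (Idx n k) :=
  Finset.univ.filter fun t =>
    (∀ j, aI t j + xI t j + bI t j ≤ κ j) ∧
    1 ≤ ∑ j, (aI t j + xI t j + bI t j) ∧
    ∑ j, (aI t j + xI t j + bI t j) ≤ n

/-- the reduced index set `𝓘_R` -/
def IRset (n k : ℕ) (κ : Fin k → ℕ) : Finset (Idx n k) :=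
  (Iset n k κ).filter fun t =>
    ∀ j, aI t j * xI t j * bI t j = 0 ∨ aI t j + xI t j + bI t j = κ j

section LP

variable {n k : ℕ}

/-- the primal LP objective `∑_{t ∈ 𝓘} w(B_t) θ(t)` for `θ : 𝓘 → ℝ` -/
def primalObj (n k : ℕ) (κ : Fin k → ℕ) (w : ℕ → ℝ)
    (θ : {t : Idx n k // t ∈ Iset n k κ} → ℝ) : ℝ :=
  ∑ t ∈ (Iset n k κ).attach, w (BtI t.1) * θ t

/-- feasibility for the primal LP -/
def PrimalFeasible (n k : ℕ) (net : Network n k) (w : ℕ → ℝ) (f : Fin k → ℕ → ℝ)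
    (θ : {t : Idx n k // t ∈ Iset n k net.κ} → ℝ) : Prop :=
  (∀ t, 0 ≤ θ t) ∧
  (∀ j : Fin k, 0 ≤ ∑ t ∈ (Iset n k net.κ).attach,
      ((aI t.1 j : ℝ) * f j (Atj net t.1 j) - (bI t.1 j : ℝ) * f j (Atj net t.1 j + 1)) * θ t) ∧
  ∑ t ∈ (Iset n k net.κ).attach, w (AtI t.1) * θ t = 1

/-- the set of primal objective values at feasible points; `W* = sSup` of this set -/
def PrimalVals (n k : ℕ) (net : Network n k) (w : ℕ → ℝ) (f : Fin k → ℕ → ℝ) : Set ℝ :=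
  {x | ∃ θ, PrimalFeasible n k net w f θ ∧ x = primalObj n k net.κ w θ}

/-- the dual LP constraint associated to index `t` -/
def DualConstr (net : Network n k) (w : ℕ → ℝ) (f : Fin k → ℕ → ℝ)
    (lam : Fin k → ℝ) (μ : ℝ) (t : Idx n k) : Prop :=
  w (BtI t) +
      ∑ j, lam j * ((aI t j : ℝ) * f j (Atj net t j) - (bI t j : ℝ) * f j (Atj net t j + 1))
    ≤ μ * w (AtI t)

/-- the set of dual-feasible values `μ`; `V* = sInf` of this set -/
def DualSet (n k : ℕ) (net : Network n k) (w : ℕ → ℝ) (f : Fin k → ℕ → ℝ) : Set ℝ :=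
  {μ | ∃ lam : Fin k → ℝ, (∀ j, 0 ≤ lam j) ∧ ∀ t ∈ IRset n k net.κ, DualConstr net w f lam μ t}

/-- feasibility for the LP deriving the optimal mechanism (`λ` folded into `f`) -/
def DesignFeas (n k : ℕ) (net : Network n k) (w : ℕ → ℝ) (f : Fin k → ℕ → ℝ) (μ : ℝ) : Prop :=
  IsMech net f ∧ ∀ t ∈ IRset n k net.κ,
    w (BtI t) + ∑ j, ((aI t j : ℝ) * f j (Atj net t j) - (bI t j : ℝ) * f j (Atj net t j + 1))
      ≤ μ * w (AtI t)

end LP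

section Theta

variable {n k : ℕ}

/-- `𝓡(t)`: the resources whose selection signature at `(a^ne, a^opt)` is `t` -/
def Rt (G : RAGame n) (net : Network n k) (ane aopt : Fin n → Finset (Fin G.m))
    (t : Idx n k) : Finset (Fin G.m) :=
  Finset.univ.filter fun r =>
    ∀ j : Fin k,
      G.cnt ane (net.classSet j) r = aI t j + xI t j ∧
      G.cnt aopt (net.classSet j) r = bI t j + xI t j ∧
      ((net.classSet j).filter fun i => r ∈ ane i ∧ r ∈ aopt i).card = xI t j

/-- `θ(t) = ∑_{r ∈ 𝓡(t)} v r` -/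
def θof (G : RAGame n) (net : Network n k) (ane aopt : Fin n → Finset (Fin G.m))
    (t : Idx n k) : ℝ :=
  ∑ r ∈ Rt G net ane aopt t, G.v r

end Theta

section Blind

variable {n : ℕ}

/-- utility in the blind network: blind agents (members of `B`) observe only themselves -/
def blindUtil (G : RAGame n) (B : Finset (Fin n)) (fbl : ℝ) (fnbl : ℕ → ℝ)
    (a : Fin n → Finset (Fin G.m)) (i : Fin n) : ℝ :=
  if i ∈ B then ∑ r ∈ a i, G.v r * fbl
  else ∑ r ∈ a i, G.v r * fnbl (G.cnt a Finset.univ r)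

/-- pure Nash equilibrium in the blind network -/
def IsBlindNash (G : RAGame n) (B : Finset (Fin n)) (fbl : ℝ) (fnbl : ℕ → ℝ)
    (a : Fin n → Finset (Fin G.m)) : Prop :=
  G.IsProfile a ∧ ∀ (i : Fin n), ∀ b ∈ G.act i,
    blindUtil G B fbl fnbl (Function.update a i b) i ≤ blindUtil G B fbl fnbl a i

/-- the price of anarchy for the blind network with blind agents `B` -/
def blindPoA (n : ℕ) (w : ℕ → ℝ) (B : Finset (Fin n)) (fbl : ℝ) (fnbl : ℕ → ℝ) : ℝ :=
  sInf {q | ∃ G : RAGame n, GoodGame G w ∧ (∃ a, IsBlindNash G B fbl fnbl a) ∧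
    q = sInf {x | ∃ a, IsBlindNash G B fbl fnbl a ∧ x = G.welf w a} /
        sSup {x | ∃ a, G.IsProfile a ∧ x = G.welf w a}}

/-- a triple `(a, x, b)` with entries of size at most `n` -/
abbrev Trip (n : ℕ) := Fin (n + 1) × Fin (n + 1) × Fin (n + 1)

def ta1 (t : Trip n × Trip n) : ℕ := (t.1.1 : ℕ)
def tx1 (t : Trip n × Trip n) : ℕ := (t.1.2.1 : ℕ)
def tb1 (t : Trip n × Trip n) : ℕ := (t.1.2.2 : ℕ)
def ta2 (t : Trip n × Trip n) : ℕ := (t.2.1 : ℕ)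
def tx2 (t : Trip n × Trip n) : ℕ := (t.2.2.1 : ℕ)
def tb2 (t : Trip n × Trip n) : ℕ := (t.2.2.2 : ℕ)

/-- `A_t` for the two-class (blind) network; also equals `A_{t,2}` -/
def At2 (t : Trip n × Trip n) : ℕ := ta1 t + tx1 t + ta2 t + tx2 t

/-- `B_t` for the two-class (blind) network -/
def Bt2 (t : Trip n × Trip n) : ℕ := tb1 t + tx1 t + tb2 t + tx2 t

end Blind

/-- the index set `𝓘` for the two-class (blind) network with `κ` blind agents -/
def I2 (n κ : ℕ) : Finset (Trip n × Trip n) :=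
  Finset.univ.filter fun t =>
    ta1 t + tx1 t + tb1 t ≤ κ ∧ ta2 t + tx2 t + tb2 t ≤ n - κ ∧
    1 ≤ ta1 t + tx1 t + tb1 t + (ta2 t + tx2 t + tb2 t) ∧
    ta1 t + tx1 t + tb1 t + (ta2 t + tx2 t + tb2 t) ≤ n

/-- the reduced index set `𝓘_R` for the two-class (blind) network -/
def IR2 (n κ : ℕ) : Finset (Trip n × Trip n) :=
  (I2 n κ).filter fun t =>
    (ta1 t * tx1 t * tb1 t = 0 ∨ ta1 t + tx1 t + tb1 t = κ) ∧
    (ta2 t * tx2 t * tb2 t = 0 ∨ ta2 t + tx2 t + tb2 t = n - κ)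

section BlindLP

variable {n : ℕ}

/-- the dual LP constraint for the blind network at index `t` -/
def BlindDualConstr (w : ℕ → ℝ) (fnbl : ℕ → ℝ) (l1 l2 μ : ℝ) (t : Trip n × Trip n) : Prop :=
  w (Bt2 t) + l1 * ((ta1 t : ℝ) - (tb1 t : ℝ)) +
      l2 * ((ta2 t : ℝ) * fnbl (At2 t) - (tb2 t : ℝ) * fnbl (At2 t + 1))
    ≤ μ * w (At2 t)

/-- the set of dual-feasible values `μ` for the blind network; `V* = sInf` of this set -/
def BlindDualSet (n κ : ℕ) (w : ℕ → ℝ) (fnbl : ℕ → ℝ) : Set ℝ :=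
  {μ | ∃ l1 l2 : ℝ, 0 ≤ l1 ∧ 0 ≤ l2 ∧ ∀ t ∈ IR2 n κ, BlindDualConstr w fnbl l1 l2 μ t}

/-- feasibility for the optimal-design LP of the blind network -/
def BlindDesignFeas (n κ : ℕ) (w : ℕ → ℝ) (fnbl : ℕ → ℝ) (μ : ℝ) : Prop :=
  fnbl 0 = 0 ∧ fnbl (n + 1) = 0 ∧ ∃ l : ℝ, 0 ≤ l ∧ ∀ t ∈ IR2 n κ,
    w (Bt2 t) + l * ((ta1 t : ℝ) - (tb1 t : ℝ)) + (ta2 t : ℝ) * fnbl (At2 t)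
      - (tb2 t : ℝ) * fnbl (At2 t + 1) ≤ μ * w (At2 t)

/-- `𝓡(t)` for the two-class blind network with blind agents `B` -/
def Rt2 (G : RAGame n) (B : Finset (Fin n)) (ane aopt : Fin n → Finset (Fin G.m))
    (t : Trip n × Trip n) : Finset (Fin G.m) :=
  Finset.univ.filter fun r =>
    G.cnt ane B r = ta1 t + tx1 t ∧ G.cnt aopt B r = tb1 t + tx1 t ∧
    (B.filter fun i => r ∈ ane i ∧ r ∈ aopt i).card = tx1 t ∧
    G.cnt ane Bᶜ r = ta2 t + tx2 t ∧ G.cnt aopt Bᶜ r = tb2 t + tx2 t ∧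
    (Bᶜ.filter fun i => r ∈ ane i ∧ r ∈ aopt i).card = tx2 t

/-- `θ(t)` for the two-class blind network -/
def θof2 (G : RAGame n) (B : Finset (Fin n)) (ane aopt : Fin n → Finset (Fin G.m))
    (t : Trip n × Trip n) : ℝ :=
  ∑ r ∈ Rt2 G B ane aopt t, G.v r

end BlindLP

/-- the potential function `G_j(a) = ∑_r v_r ∑_{l=1}^{|a|_r^{𝓝_j}} f_j(l)` -/
def potentialG {n k : ℕ} (G : RAGame n) (net : Network n k) (f : Fin k → ℕ → ℝ)
    (j : Fin k) (a : Fin n → Finset (Fin G.m)) : ℝ :=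
  ∑ r, G.v r * ∑ l ∈ Finset.Icc 1 (G.cnt a (net.Nb j) r), f j l

/-- the potential `G_1(a) = ∑_r v_r |a|_r^{bl}` for the class of blind agents `B` -/
def blindPotential {n : ℕ} (G : RAGame n) (B : Finset (Fin n))
    (a : Fin n → Finset (Fin G.m)) : ℝ :=
  ∑ r, G.v r * (G.cnt a B r : ℝ)

/-- the game with every resource value scaled by `c ≥ 0` -/
def RAGame.scale {n : ℕ} (G : RAGame n) (c : ℝ) (hc : 0 ≤ c) : RAGame n :=
  ⟨G.m, fun r => c * G.v r, fun r => mul_nonneg hc (G.v_nonneg r), G.act, G.act_nonempty⟩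

/-- the game with the same resources but the action set of each agent `i`
restricted to `{a i, b i}` -/
def RAGame.restrictTwo {n : ℕ} (G : RAGame n) (a b : Fin n → Finset (Fin G.m)) : RAGame n :=
  ⟨G.m, G.v, G.v_nonneg, fun i => {a i, b i}, fun i => ⟨a i, by simp⟩⟩

end

/-!
Given a game with an equilibrium `ane` and any profile `aopt`, sort the resources by their
signature `t`: per class `j`, the numbers `(a_j, x_j, b_j)` of its agents selecting the resource
only at `ane`, at both, and only at `aopt`. The total value `θ t` of the resources of signature
`t`, divided by `W(ane)`, is primal feasible with objective `W(aopt) / W(ane)`: the `j`-th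
constraint is the sum, over the agents of class `j`, of their equilibrium inequalities against
deviating to `aopt`. Since `f_j(1) > 0`, an equilibrium of a game in `𝓖` has positive welfare, so
every game's ratio is at least `1 / W*`.

Conversely every feasible `θ` is realized by a game. For each `t` and each tuple of cyclic shifts
`s` of the classes put a resource of value `θ t`, selected at `ane` by the agents of class `j` in
shifted positions `[0, a_j + x_j)` and at `aopt` by those in `[a_j, a_j + x_j + b_j)`. Summed over
the shifts, the loss of any agent of class `j` deviating to `aopt` is a positive multiple of the
`j`-th constraint, so `ane` is an equilibrium, and the welfare ratio is `1 / (objective)`.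

Finally `W*` is finite by weak duality, with a dual solution that exists because `f_j(1) > 0`.
-/

lemma Finset.card_fin_lt_succ {n : ℕ} (s : Finset (Fin n)) : #s < n + 1 :=
  Nat.lt_succ_of_le (card_le_univ s |>.trans_eq (Fintype.card_fin n))

lemma Finset.card_filter_and_not_add_card_filter_and {α : Type*} (s : Finset α)
    (p q : α → Prop) [DecidablePred p] [DecidablePred q] :
    #{i ∈ s | p i ∧ ¬q i} + #{i ∈ s | p i ∧ q i} = #{i ∈ s | p i} := by
  rw [← filter_filter, ← filter_filter, add_comm]
  exact card_filter_add_card_filter_not _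

lemma Finset.card_filter_not_and_add_card_filter_and {α : Type*} (s : Finset α)
    (p q : α → Prop) [DecidablePred p] [DecidablePred q] :
    #{i ∈ s | ¬p i ∧ q i} + #{i ∈ s | p i ∧ q i} = #{i ∈ s | q i} := by
  simpa only [and_comm] using card_filter_and_not_add_card_filter_and s q p

lemma Finset.sum_sdiff_eq_sum_ite {α M : Type*} [Fintype α] [DecidableEq α] [AddCommMonoid M]
    (s t : Finset α) (g : α → M) :
    ∑ r ∈ s \ t, g r = ∑ r, if r ∈ s ∧ r ∉ t then g r else 0 := by
  rw [← sum_filter]; congr 1; ext r; simp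

lemma Fin.card_filter_val_mem_Ico {c lo hi : ℕ} (h : hi ≤ c) :
    #{q : Fin c | (q : ℕ) ∈ Ico lo hi} = hi - lo := by
  rw [← Nat.card_Ico lo hi, ← card_map Fin.valEmbedding]
  congr 1
  ext m
  simp only [mem_map, mem_filter, mem_univ, true_and, Fin.valEmbedding_apply, mem_Ico]
  exact ⟨fun ⟨q, hq, hqm⟩ => hqm ▸ hq, fun hm => ⟨⟨m, by omega⟩, hm, rfl⟩⟩

lemma Fin.card_filter_val_sub_const_mem_Ico {c lo hi : ℕ} [NeZero c] (p : Fin c) (h : hi ≤ c) :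
    #{q : Fin c | ((q - p : Fin c) : ℕ) ∈ Ico lo hi} = hi - lo := by
  rw [← Fin.card_filter_val_mem_Ico h]
  exact card_equiv (Equiv.subRight p) fun q => by simp

lemma Fin.card_filter_val_const_sub_mem_Ico {c lo hi : ℕ} [NeZero c] (p : Fin c) (h : hi ≤ c) :
    #{q : Fin c | ((p - q : Fin c) : ℕ) ∈ Ico lo hi} = hi - lo := by
  rw [← Fin.card_filter_val_mem_Ico h]
  exact card_equiv (Equiv.subLeft p) fun q => by simp

lemma Fintype.sum_pi_comp_eval {ι R : Type*} [Fintype ι] [DecidableEq ι] {α : ι → Type*}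
    [∀ i, Fintype (α i)] [∀ i, DecidableEq (α i)] [NonAssocSemiring R] (i : ι) (F : α i → R) :
    ∑ s : ∀ i, α i, F (s i) = (∏ l ∈ univ.erase i, Fintype.card (α l) : ℕ) * ∑ a, F a := by
  rw [← Finset.sum_fiberwise univ (fun s : ∀ i, α i => s i), mul_sum]
  refine Finset.sum_congr rfl fun a _ => ?_
  rw [Finset.sum_congr rfl fun s hs => by rw [(mem_filter.1 hs).2], sum_const, nsmul_eq_mul]
  congr
  simpa using card_filter_piFinset_eq_of_mem (fun l => (univ : Finset (α l))) i (mem_univ a)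

lemma csInf_eq_one_div_csSup {S T : Set ℝ} (hT : BddAbove T) {x₀ : ℝ} (hx₀ : x₀ ∈ T)
    (hx₀pos : 0 < x₀) (hlow : ∀ q ∈ S, 1 / sSup T ≤ q)
    (hup : ∀ x ∈ T, 0 < x → ∃ q ∈ S, q ≤ 1 / x) :
    sInf S = 1 / sSup T := by
  have hTpos : 0 < sSup T := hx₀pos.trans_le (le_csSup hT hx₀)
  obtain ⟨q₀, hq₀, -⟩ := hup x₀ hx₀ hx₀pos
  have hS : 1 / sSup T ≤ sInf S := le_csInf ⟨q₀, hq₀⟩ hlow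
  have hSpos : 0 < sInf S := (by positivity : (0 : ℝ) < 1 / sSup T).trans_le hS
  refine le_antisymm ?_ hS
  rw [le_div_iff₀ hTpos, mul_comm, ← le_div_iff₀ hSpos]
  refine csSup_le ⟨x₀, hx₀⟩ fun x hx => ?_
  rcases le_or_gt x 0 with hx0 | hx0
  · exact hx0.trans (by positivity)
  obtain ⟨q, hq, hqx⟩ := hup x hx hx0
  rw [le_div_iff₀ hSpos, mul_comm, ← le_div_iff₀ hx0]
  exact (csInf_le ⟨_, hlow⟩ hq).trans hqx

lemma IsBasis.nonneg {n : ℕ} {w : ℕ → ℝ} (hw : IsBasis n w) {m : ℕ} (hm : m ≤ n) : 0 ≤ w m := by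
  rcases Nat.eq_zero_or_pos m with rfl | h
  · exact hw.1.ge
  · exact (hw.2 m h hm).le

namespace Network

variable {n k : ℕ} (net : Network n k)

lemma mem_classSet {i : Fin n} {j : Fin k} : i ∈ net.classSet j ↔ net.cls i = j := by
  simp [classSet]

instance neZero_κ (j : Fin k) : NeZero (net.κ j) := by
  obtain ⟨i, hi⟩ := net.cls_surj j
  exact ⟨(card_pos.2 ⟨i, net.mem_classSet.2 hi⟩).ne'⟩

lemma sum_κ : ∑ j, net.κ j = n := by
  simpa [κ, classSet] using (card_eq_sum_card_fiberwise (s := univ) (t := univ)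
    (f := net.cls) fun _ _ => mem_coe.2 (mem_univ _)).symm

end Network

namespace RAGame

variable {n k : ℕ} (G : RAGame n)

lemma cnt_univ_le (a : Fin n → Finset (Fin G.m)) (r : Fin G.m) : G.cnt a univ r ≤ n :=
  (card_filter_le _ _).trans_eq (card_fin n)

lemma w_cnt_nonneg {w : ℕ → ℝ} (hw : IsBasis n w) (a : Fin n → Finset (Fin G.m)) (r : Fin G.m) :
    0 ≤ w (G.cnt a univ r) :=
  hw.nonneg (G.cnt_univ_le a r)

lemma welf_nonneg {w : ℕ → ℝ} (hw : IsBasis n w) (a : Fin n → Finset (Fin G.m)) :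
    0 ≤ G.welf w a :=
  sum_nonneg fun r _ => mul_nonneg (G.v_nonneg r) (G.w_cnt_nonneg hw a r)

lemma cnt_update (a : Fin n → Finset (Fin G.m)) {S : Finset (Fin n)} {i : Fin n} (hi : i ∈ S)
    (b : Finset (Fin G.m)) (r : Fin G.m) :
    G.cnt (Function.update a i b) S r + (if r ∈ a i then 1 else 0)
      = G.cnt a S r + (if r ∈ b then 1 else 0) := by
  have hsplit : ∀ a' : Fin n → Finset (Fin G.m),
      G.cnt a' S r = G.cnt a' (S.erase i) r + if r ∈ a' i then 1 else 0 := fun a' => by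
    rw [cnt, cnt, ← insert_erase hi, filter_insert, erase_insert (notMem_erase i S)]
    split_ifs <;> simp
  have hrest : G.cnt (Function.update a i b) (S.erase i) r = G.cnt a (S.erase i) r := by
    refine congrArg card (filter_congr fun i' hi' => ?_)
    rw [Function.update_of_ne (ne_of_mem_erase hi')]
  rw [hsplit, hsplit a, hrest, Function.update_self]
  ring

lemma util_sub_util_update (net : Network n k) (f : Fin k → ℕ → ℝ)
    (a : Fin n → Finset (Fin G.m)) (i : Fin n) (b : Finset (Fin G.m)) :
    G.util net f a i - G.util net f (Function.update a i b) i
      = ∑ r ∈ a i \ b, G.v r * f (net.cls i) (G.cnt a (net.Nb (net.cls i)) r)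
        - ∑ r ∈ b \ a i, G.v r * f (net.cls i) (G.cnt a (net.Nb (net.cls i)) r + 1) := by
  have hcnt := G.cnt_update a (net.mem_Nb i) b
  have hkeep : ∀ r ∈ a i ∩ b,
      G.v r * f (net.cls i) (G.cnt (Function.update a i b) (net.Nb (net.cls i)) r)
        = G.v r * f (net.cls i) (G.cnt a (net.Nb (net.cls i)) r) := fun r hr => by
    have := hcnt r; rw [mem_inter] at hr; simp only [hr, if_true] at this
    rw [Nat.add_right_cancel this]
  have hnew : ∀ r ∈ b \ a i,
      G.v r * f (net.cls i) (G.cnt (Function.update a i b) (net.Nb (net.cls i)) r)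
        = G.v r * f (net.cls i) (G.cnt a (net.Nb (net.cls i)) r + 1) := fun r hr => by
    have := hcnt r; rw [mem_sdiff] at hr; simp only [hr, if_true, if_false, add_zero] at this
    rw [this]
  rw [util, util, Function.update_self, ← sum_inter_add_sum_sdiff (a i) b,
    ← sum_inter_add_sum_sdiff b (a i), inter_comm b, sum_congr rfl hkeep, sum_congr rfl hnew]
  ring

section Classes

variable (net : Network n k) (a : Fin n → Finset (Fin G.m))

lemma cnt_eq_sum_cnt_classSet {S : Finset (Fin n)}
    (hS : ∀ i ∈ S, ∀ i', net.cls i' = net.cls i → i' ∈ S) (r : Fin G.m) :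
    G.cnt a S r = ∑ l with net.classSet l ⊆ S, G.cnt a (net.classSet l) r := by
  rw [cnt, card_eq_sum_card_fiberwise (f := net.cls) fun i hi => ?_]
  · refine sum_congr rfl fun l hl => congrArg card ?_
    ext i
    simp only [mem_filter, net.mem_classSet]
    exact ⟨fun ⟨⟨_, hr⟩, hl⟩ => ⟨hl, hr⟩,
      fun ⟨hil, hr⟩ => ⟨⟨(mem_filter.1 hl).2 (net.mem_classSet.2 hil), hr⟩, hil⟩⟩
  · simp only [coe_filter, mem_univ, true_and, Set.mem_ofPred_eq] at hi ⊢
    exact fun i' hi' => hS i hi.1 i' (net.mem_classSet.1 hi')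

lemma cnt_univ_eq_sum_cnt_classSet (r : Fin G.m) :
    G.cnt a univ r = ∑ l, G.cnt a (net.classSet l) r := by
  rw [G.cnt_eq_sum_cnt_classSet net a (fun _ _ _ _ => mem_univ _)]
  simp only [subset_univ, filter_true]

lemma cnt_Nb_eq_sum_cnt_classSet (j : Fin k) (r : Fin G.m) :
    G.cnt a (net.Nb j) r = ∑ l with net.classSet l ⊆ net.Nb j, G.cnt a (net.classSet l) r :=
  G.cnt_eq_sum_cnt_classSet net a (fun i hi i' hi' => net.Nb_union j i i' hi'.symm hi) r

end Classes

section Equilibrium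

variable {w : ℕ → ℝ}

lemma cnt_eq_zero_of_welf_eq_zero (hw : IsBasis n w) {a : Fin n → Finset (Fin G.m)}
    (h : G.welf w a = 0) {r : Fin G.m} (hr : 0 < G.v r) : G.cnt a univ r = 0 := by
  by_contra hc
  have hterm := (sum_eq_zero_iff_of_nonneg fun r _ =>
    mul_nonneg (G.v_nonneg r) (G.w_cnt_nonneg hw a r)).1 h r (mem_univ r)
  exact (mul_pos hr (hw.2 _ (Nat.one_le_iff_ne_zero.2 hc) (G.cnt_univ_le a r))).ne' hterm

lemma exists_mem_pos_of_welf_pos (hw : w 0 = 0) {a : Fin n → Finset (Fin G.m)}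
    (h : 0 < G.welf w a) : ∃ i r, r ∈ a i ∧ 0 < G.v r := by
  obtain ⟨r, -, hr⟩ := exists_lt_of_sum_lt (by simpa [welf] using h :
    ∑ r : Fin G.m, (0 : ℝ) < ∑ r, G.v r * w (G.cnt a univ r))
  have hc : G.cnt a univ r ≠ 0 := fun h0 => by simp [h0, hw] at hr
  obtain ⟨i, hi⟩ := card_ne_zero.1 hc
  exact ⟨i, r, (mem_filter.1 hi).2, (G.v_nonneg r).lt_of_ne fun h0 => by simp [← h0] at hr⟩

lemma cnt_update_of_cnt_eq_zero {a : Fin n → Finset (Fin G.m)} {r : Fin G.m}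
    (h : G.cnt a univ r = 0) {S : Finset (Fin n)} {i : Fin n} (hi : i ∈ S)
    {b : Finset (Fin G.m)} (hr : r ∈ b) : G.cnt (Function.update a i b) S r = 1 := by
  have hS : G.cnt a S r = 0 :=
    Nat.eq_zero_of_le_zero (h ▸ card_le_card (filter_subset_filter _ (subset_univ S)))
  have hai : r ∉ a i := fun hai => card_ne_zero.2 ⟨i, mem_filter.2 ⟨mem_univ i, hai⟩⟩ h
  simpa [hS, hai, hr] using G.cnt_update a hi b r

/-- If the equilibrium welfare were `0`, every valuable resource would be unused, and an agent
selecting a valuable resource in a positive-welfare profile would gain `f_j(1) > 0` by switching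
to that action. -/
lemma welf_pos_of_isNash (hw : IsBasis n w) {net : Network n k} {f : Fin k → ℕ → ℝ}
    (hfpos : ∀ j, 0 < f j 1) (hG : GoodGame G w) {ane : Fin n → Finset (Fin G.m)}
    (hne : G.IsNash net f ane) : 0 < G.welf w ane := by
  obtain ⟨a₀, ha₀, hpos⟩ := hG
  obtain ⟨i, rs, hrs, hvrs⟩ := G.exists_mem_pos_of_welf_pos hw.1 hpos
  refine (G.welf_nonneg hw ane).lt_of_ne fun h0 => ?_
  have hunused : ∀ r, 0 < G.v r → G.cnt ane univ r = 0 :=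
    fun r hr => G.cnt_eq_zero_of_welf_eq_zero hw h0.symm hr
  have hU : G.util net f ane i = 0 := sum_eq_zero fun r hr => by
    rcases (G.v_nonneg r).eq_or_lt with hv | hv
    · rw [← hv, zero_mul]
    · exact absurd (hunused r hv) (card_ne_zero.2 ⟨i, mem_filter.2 ⟨mem_univ i, hr⟩⟩)
  have hdev : G.util net f (Function.update ane i (a₀ i)) i
      = ∑ r ∈ a₀ i, G.v r * f (net.cls i) 1 := by
    rw [util, Function.update_self]
    refine sum_congr rfl fun r hr => ?_
    rcases (G.v_nonneg r).eq_or_lt with hv | hv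
    · rw [← hv, zero_mul, zero_mul]
    · rw [G.cnt_update_of_cnt_eq_zero (hunused r hv) (net.mem_Nb i) hr]
  have hgain : 0 < ∑ r ∈ a₀ i, G.v r * f (net.cls i) 1 :=
    sum_pos' (fun r _ => mul_nonneg (G.v_nonneg r) (hfpos _).le)
      ⟨rs, hrs, mul_pos hvrs (hfpos _)⟩
  linarith [hne.2 i (a₀ i) (ha₀ i)]

end Equilibrium

end RAGame

section Indices

variable {n k : ℕ}

lemma idx_ext {t t' : Idx n k} (ha : ∀ j, aI t j = aI t' j) (hx : ∀ j, xI t j = xI t' j)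
    (hb : ∀ j, bI t j = bI t' j) : t = t' :=
  funext fun j => Prod.ext (Fin.ext (ha j)) (Prod.ext (Fin.ext (hx j)) (Fin.ext (hb j)))

lemma sum_total_le_AtI_add_BtI (t : Idx n k) :
    ∑ j, (aI t j + xI t j + bI t j) ≤ AtI t + BtI t := by
  rw [AtI, BtI, ← sum_add_distrib]
  exact sum_le_sum fun j _ => by omega

lemma AtI_le_of_mem_Iset {κ : Fin k → ℕ} {t : Idx n k} (ht : t ∈ Iset n k κ) : AtI t ≤ n :=
  (sum_le_sum fun j _ => by omega).trans (mem_filter.1 ht).2.2.2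

lemma BtI_le_of_mem_Iset {κ : Fin k → ℕ} {t : Idx n k} (ht : t ∈ Iset n k κ) : BtI t ≤ n :=
  (sum_le_sum fun j _ => by omega).trans (mem_filter.1 ht).2.2.2

lemma one_le_AtI_add_BtI_of_mem_Iset {κ : Fin k → ℕ} {t : Idx n k} (ht : t ∈ Iset n k κ) :
    1 ≤ AtI t + BtI t :=
  (mem_filter.1 ht).2.2.1.trans (sum_total_le_AtI_add_BtI t)

lemma aI_eq_zero_of_AtI_eq_zero {t : Idx n k} (h : AtI t = 0) (j : Fin k) : aI t j = 0 := by
  have := sum_eq_zero_iff.1 h j (mem_univ j); omega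

lemma xI_eq_zero_of_AtI_eq_zero {t : Idx n k} (h : AtI t = 0) (j : Fin k) : xI t j = 0 := by
  have := sum_eq_zero_iff.1 h j (mem_univ j); omega

lemma Atj_eq_zero_of_AtI_eq_zero (net : Network n k) {t : Idx n k} (h : AtI t = 0) (j : Fin k) :
    Atj net t j = 0 :=
  sum_eq_zero fun l _ => by
    rw [aI_eq_zero_of_AtI_eq_zero h, xI_eq_zero_of_AtI_eq_zero h, add_zero]

end Indices

namespace RAGame

variable {n k : ℕ} (G : RAGame n)

section Signature

variable (net : Network n k) (ane aopt : Fin n → Finset (Fin G.m))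

def signature (r : Fin G.m) : Idx n k := fun j =>
  (⟨#{i ∈ net.classSet j | r ∈ ane i ∧ r ∉ aopt i}, card_fin_lt_succ _⟩,
   ⟨#{i ∈ net.classSet j | r ∈ ane i ∧ r ∈ aopt i}, card_fin_lt_succ _⟩,
   ⟨#{i ∈ net.classSet j | r ∉ ane i ∧ r ∈ aopt i}, card_fin_lt_succ _⟩)

variable (r : Fin G.m) (j : Fin k)

lemma aI_add_xI_signature :
    aI (G.signature net ane aopt r) j + xI (G.signature net ane aopt r) j
      = G.cnt ane (net.classSet j) r :=
  card_filter_and_not_add_card_filter_and (net.classSet j) (r ∈ ane ·) (r ∈ aopt ·)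

lemma bI_add_xI_signature :
    bI (G.signature net ane aopt r) j + xI (G.signature net ane aopt r) j
      = G.cnt aopt (net.classSet j) r :=
  card_filter_not_and_add_card_filter_and (net.classSet j) (r ∈ ane ·) (r ∈ aopt ·)

lemma signature_total_le_κ :
    aI (G.signature net ane aopt r) j + xI (G.signature net ane aopt r) j
      + bI (G.signature net ane aopt r) j ≤ net.κ j := by
  have hb : bI (G.signature net ane aopt r) j ≤ #{i ∈ net.classSet j | r ∉ ane i} :=
    card_le_card <| monotone_filter_right (net.classSet j) fun _ _ (h : _ ∧ _) => h.1
  have := card_filter_add_card_filter_not (s := net.classSet j) (fun i => r ∈ ane i)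
  rw [G.aI_add_xI_signature]
  exact (Nat.add_le_add_left hb _).trans this.le

lemma AtI_signature : AtI (G.signature net ane aopt r) = G.cnt ane univ r := by
  rw [G.cnt_univ_eq_sum_cnt_classSet net]
  exact sum_congr rfl fun j _ => G.aI_add_xI_signature net ane aopt r j

lemma BtI_signature : BtI (G.signature net ane aopt r) = G.cnt aopt univ r := by
  rw [G.cnt_univ_eq_sum_cnt_classSet net]
  exact sum_congr rfl fun j _ => G.bI_add_xI_signature net ane aopt r j

lemma Atj_signature : Atj net (G.signature net ane aopt r) j = G.cnt ane (net.Nb j) r := by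
  rw [G.cnt_Nb_eq_sum_cnt_classSet net]
  exact sum_congr rfl fun l _ => G.aI_add_xI_signature net ane aopt r l

lemma signature_eq_zero_of_notMem_Iset (h : G.signature net ane aopt r ∉ Iset n k net.κ) :
    G.signature net ane aopt r = 0 := by
  have hle := sum_le_sum fun j (_ : j ∈ univ) => G.signature_total_le_κ net ane aopt r j
  rw [net.sum_κ] at hle
  simp only [Iset, mem_filter, mem_univ, true_and, not_and, not_le] at h
  have hsum := Nat.lt_one_iff.1 <| not_le.1 fun h1 =>
    (h (G.signature_total_le_κ net ane aopt r) h1).not_ge hle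
  have h0 := fun j => sum_eq_zero_iff.1 hsum j (mem_univ j)
  refine idx_ext (fun j => ?_) (fun j => ?_) (fun j => ?_) <;>
    · have := h0 j; simp only [aI, xI, bI, Pi.zero_apply, Prod.fst_zero, Prod.snd_zero,
        Fin.val_zero] at this ⊢; omega

lemma mem_Rt_iff {t : Idx n k} : r ∈ Rt G net ane aopt t ↔ G.signature net ane aopt r = t := by
  simp only [Rt, mem_filter, mem_univ, true_and]
  constructor
  · intro h
    have hx : ∀ j, xI (G.signature net ane aopt r) j = xI t j := fun j => (h j).2.2
    refine idx_ext (fun j => ?_) hx (fun j => ?_)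
    · have := G.aI_add_xI_signature net ane aopt r j; have := (h j).1; have := hx j; omega
    · have := G.bI_add_xI_signature net ane aopt r j; have := (h j).2.1; have := hx j; omega
  · rintro rfl j
    exact ⟨(G.aI_add_xI_signature net ane aopt r j).symm,
      (G.bI_add_xI_signature net ane aopt r j).symm, rfl⟩

lemma θof_nonneg (t : Idx n k) : 0 ≤ θof G net ane aopt t :=
  sum_nonneg fun r _ => G.v_nonneg r

lemma sum_mul_θof {F : Idx n k → ℝ} (hF : F 0 = 0) :
    ∑ t ∈ (Iset n k net.κ).attach, F t.1 * θof G net ane aopt t.1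
      = ∑ r, F (G.signature net ane aopt r) * G.v r := by
  have hRt : ∀ t, Rt G net ane aopt t = univ.filter (G.signature net ane aopt · = t) :=
    fun t => by ext r; simp [G.mem_Rt_iff]
  calc ∑ t ∈ (Iset n k net.κ).attach, F t.1 * θof G net ane aopt t.1
      = ∑ t ∈ Iset n k net.κ, ∑ r with G.signature net ane aopt r = t,
          F (G.signature net ane aopt r) * G.v r := by
        rw [sum_attach (Iset n k net.κ) fun t => F t * θof G net ane aopt t]
        refine sum_congr rfl fun t _ => ?_
        rw [θof, hRt, mul_sum]
        exact sum_congr rfl fun r hr => by rw [(mem_filter.1 hr).2]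
    _ = ∑ r with G.signature net ane aopt r ∈ Iset n k net.κ,
          F (G.signature net ane aopt r) * G.v r := sum_fiberwise_eq_sum_filter _ _ _ _
    _ = ∑ r, F (G.signature net ane aopt r) * G.v r := sum_filter_of_ne fun r _ hne => by
        by_contra h
        rw [G.signature_eq_zero_of_notMem_Iset net ane aopt r h, hF, zero_mul] at hne
        exact hne rfl

lemma sum_w_AtI_mul_θof {w : ℕ → ℝ} (hw : w 0 = 0) :
    ∑ t ∈ (Iset n k net.κ).attach, w (AtI t.1) * θof G net ane aopt t.1 = G.welf w ane := by
  rw [G.sum_mul_θof net ane aopt (F := fun t => w (AtI t)) (by simpa [AtI, aI, xI] using hw)]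
  exact sum_congr rfl fun r _ => by rw [G.AtI_signature, mul_comm]

lemma sum_w_BtI_mul_θof {w : ℕ → ℝ} (hw : w 0 = 0) :
    ∑ t ∈ (Iset n k net.κ).attach, w (BtI t.1) * θof G net ane aopt t.1 = G.welf w aopt := by
  rw [G.sum_mul_θof net ane aopt (F := fun t => w (BtI t)) (by simpa [BtI, bI, xI] using hw)]
  exact sum_congr rfl fun r _ => by rw [G.BtI_signature, mul_comm]

variable (f : Fin k → ℕ → ℝ)

lemma sum_util_sub_util_update_eq (j : Fin k) :
    ∑ i ∈ net.classSet j, (G.util net f ane i - G.util net f (Function.update ane i (aopt i)) i)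
      = ∑ r, ((aI (G.signature net ane aopt r) j : ℝ) * f j (G.cnt ane (net.Nb j) r)
          - (bI (G.signature net ane aopt r) j : ℝ) * f j (G.cnt ane (net.Nb j) r + 1))
          * G.v r := by
  calc _ = ∑ i ∈ net.classSet j,
        ((∑ r, if r ∈ ane i ∧ r ∉ aopt i then G.v r * f j (G.cnt ane (net.Nb j) r) else 0)
          - ∑ r, if r ∈ aopt i ∧ r ∉ ane i then G.v r * f j (G.cnt ane (net.Nb j) r + 1)
            else 0) :=
        sum_congr rfl fun i hi => by
          rw [util_sub_util_update, net.mem_classSet.1 hi, sum_sdiff_eq_sum_ite,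
            sum_sdiff_eq_sum_ite]
    _ = _ := by
        rw [sum_sub_distrib, sum_comm, sum_comm (s := net.classSet j), ← sum_sub_distrib]
        refine sum_congr rfl fun r _ => ?_
        rw [← sum_filter, ← sum_filter, sum_const, sum_const, nsmul_eq_mul, nsmul_eq_mul]
        simp only [aI, bI, signature, and_comm (a := r ∉ ane _)]
        ring

end Signature

variable {net : Network n k} {w : ℕ → ℝ} {f : Fin k → ℕ → ℝ} {ane aopt : Fin n → Finset (Fin G.m)}

lemma constraint_sum_θof_nonneg (hne : G.IsNash net f ane) (hopt : G.IsProfile aopt) (j : Fin k) :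
    0 ≤ ∑ t ∈ (Iset n k net.κ).attach,
      ((aI t.1 j : ℝ) * f j (Atj net t.1 j) - (bI t.1 j : ℝ) * f j (Atj net t.1 j + 1))
        * θof G net ane aopt t.1 := by
  rw [G.sum_mul_θof net ane aopt (F := fun t => (aI t j : ℝ) * f j (Atj net t j)
    - (bI t j : ℝ) * f j (Atj net t j + 1)) (by simp [aI, bI])]
  simp only [G.Atj_signature]
  rw [← G.sum_util_sub_util_update_eq net ane aopt f]
  exact sum_nonneg fun i _ => sub_nonneg.2 (hne.2 i (aopt i) (hopt i))

lemma div_welf_mem_primalVals (hw : w 0 = 0) (hne : G.IsNash net f ane)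
    (hopt : G.IsProfile aopt) (hpos : 0 < G.welf w ane) :
    G.welf w aopt / G.welf w ane ∈ PrimalVals n k net w f := by
  refine ⟨fun t => θof G net ane aopt t.1 / G.welf w ane,
    ⟨fun t => div_nonneg (G.θof_nonneg net ane aopt t.1) hpos.le, fun j => ?_, ?_⟩, ?_⟩
  · simp_rw [← mul_div_assoc, ← sum_div]
    exact div_nonneg (G.constraint_sum_θof_nonneg hne hopt j) hpos.le
  · simp_rw [← mul_div_assoc, ← sum_div]
    rw [G.sum_w_AtI_mul_θof net ane aopt hw, div_self hpos.ne']
  · simp_rw [primalObj, ← mul_div_assoc, ← sum_div]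
    rw [G.sum_w_BtI_mul_θof net ane aopt hw]

end RAGame

section PrimalLP

variable {n k : ℕ} {net : Network n k} {w : ℕ → ℝ} {f : Fin k → ℕ → ℝ}

lemma primalObj_le_of_dualConstr {θ : {t // t ∈ Iset n k net.κ} → ℝ}
    (hθ : PrimalFeasible n k net w f θ) {lam : Fin k → ℝ} (hlam : ∀ j, 0 ≤ lam j) {μ : ℝ}
    (hdual : ∀ t ∈ Iset n k net.κ, DualConstr net w f lam μ t) :
    primalObj n k net.κ w θ ≤ μ := by
  obtain ⟨hθ0, hcon, hnorm⟩ := hθ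
  calc primalObj n k net.κ w θ
      ≤ primalObj n k net.κ w θ + ∑ j, lam j * ∑ t ∈ (Iset n k net.κ).attach,
          ((aI t.1 j : ℝ) * f j (Atj net t.1 j) - (bI t.1 j : ℝ) * f j (Atj net t.1 j + 1))
            * θ t :=
        le_add_of_nonneg_right (sum_nonneg fun j _ => mul_nonneg (hlam j) (hcon j))
    _ = ∑ t ∈ (Iset n k net.κ).attach, (w (BtI t.1) + ∑ j, lam j *
          ((aI t.1 j : ℝ) * f j (Atj net t.1 j) - (bI t.1 j : ℝ) * f j (Atj net t.1 j + 1)))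
            * θ t := by
        simp_rw [primalObj, add_mul, sum_add_distrib, mul_sum, sum_mul]
        rw [sum_comm]
        simp_rw [mul_assoc]
    _ ≤ ∑ t ∈ (Iset n k net.κ).attach, μ * w (AtI t.1) * θ t :=
        sum_le_sum fun t _ => mul_le_mul_of_nonneg_right (hdual t.1 t.2) (hθ0 t)
    _ = μ := by simp_rw [mul_assoc, ← mul_sum, hnorm, mul_one]

/-- With multipliers `Λ / f_j(1)`, the constraint terms of an index with `A_t = 0` add up to
`-Λ B_t`. -/
lemma dualConstr_of_AtI_eq_zero (hw : IsBasis n w) (hfpos : ∀ j, 0 < f j 1) {Λ : ℝ}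
    (hΛ : 0 ≤ Λ) (hwΛ : ∀ m ≤ n, w m ≤ Λ) {t : Idx n k} (ht : t ∈ Iset n k net.κ)
    (hA : AtI t = 0) (μ : ℝ) : DualConstr net w f (fun j => Λ / f j 1) μ t := by
  have hterm : ∀ j, Λ / f j 1 * ((aI t j : ℝ) * f j (Atj net t j)
      - (bI t j : ℝ) * f j (Atj net t j + 1)) = -(Λ * bI t j) := fun j => by
    simp only [aI_eq_zero_of_AtI_eq_zero hA, Atj_eq_zero_of_AtI_eq_zero net hA,
      Nat.cast_zero, zero_mul, zero_sub, zero_add]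
    field_simp [(hfpos j).ne']
  have hB : 1 ≤ BtI t := by have := one_le_AtI_add_BtI_of_mem_Iset ht; omega
  have hBsum : (BtI t : ℝ) = ∑ j, (bI t j : ℝ) := by
    simp [BtI, xI_eq_zero_of_AtI_eq_zero hA]
  rw [DualConstr, sum_congr rfl fun j _ => hterm j, sum_neg_distrib, ← mul_sum, ← hBsum, hA, hw.1,
    mul_zero, ← sub_eq_add_neg, sub_nonpos]
  exact (hwΛ _ (BtI_le_of_mem_Iset ht)).trans (le_mul_of_one_le_right hΛ (by exact_mod_cast hB))

lemma exists_dualConstr (hw : IsBasis n w) (hfpos : ∀ j, 0 < f j 1) :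
    ∃ lam : Fin k → ℝ, (∀ j, 0 ≤ lam j) ∧
      ∃ μ, ∀ t ∈ Iset n k net.κ, DualConstr net w f lam μ t := by
  set Λ := ∑ m ∈ range (n + 1), w m
  have hwΛ : ∀ m ≤ n, w m ≤ Λ := fun m hm =>
    single_le_sum (fun m' hm' => hw.nonneg (Nat.lt_succ_iff.1 (mem_range.1 hm')))
      (mem_range.2 (Nat.lt_succ_of_le hm))
  have hΛ : 0 ≤ Λ := (hw.nonneg le_rfl).trans (hwΛ n le_rfl)
  set L : Idx n k → ℝ := fun t => w (BtI t) + ∑ j, Λ / f j 1 *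
    ((aI t j : ℝ) * f j (Atj net t j) - (bI t j : ℝ) * f j (Atj net t j + 1))
  refine ⟨fun j => Λ / f j 1, fun j => div_nonneg hΛ (hfpos j).le,
    ∑ t ∈ Iset n k net.κ, |L t| / w (AtI t), fun t ht => ?_⟩
  rcases Nat.eq_zero_or_pos (AtI t) with hA | hA
  · exact dualConstr_of_AtI_eq_zero hw hfpos hΛ hwΛ ht hA _
  have hwA : 0 < w (AtI t) := hw.2 _ hA (AtI_le_of_mem_Iset ht)
  calc L t ≤ |L t| / w (AtI t) * w (AtI t) := by
        rw [div_mul_cancel₀ _ hwA.ne']; exact le_abs_self _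
    _ ≤ _ := mul_le_mul_of_nonneg_right (single_le_sum (f := fun t' => |L t'| / w (AtI t'))
        (fun t' ht' => div_nonneg (abs_nonneg _) (hw.nonneg (AtI_le_of_mem_Iset ht'))) ht) hwA.le

lemma bddAbove_primalVals (hw : IsBasis n w) (hfpos : ∀ j, 0 < f j 1) :
    BddAbove (PrimalVals n k net w f) := by
  obtain ⟨lam, hlam, μ, hdual⟩ := exists_dualConstr (net := net) hw hfpos
  exact ⟨μ, by rintro _ ⟨θ, hθ, rfl⟩; exact primalObj_le_of_dualConstr hθ hlam hdual⟩

lemma div_mem_primalVals_of_mem_Iset {t₀ : Idx n k} (ht₀ : t₀ ∈ Iset n k net.κ)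
    (hA : 0 < w (AtI t₀))
    (hc : ∀ j, 0 ≤ (aI t₀ j : ℝ) * f j (Atj net t₀ j) - (bI t₀ j : ℝ) * f j (Atj net t₀ j + 1)) :
    w (BtI t₀) / w (AtI t₀) ∈ PrimalVals n k net w f := by
  have hsum : ∀ g : Idx n k → ℝ, ∑ t ∈ (Iset n k net.κ).attach,
      g t.1 * (if t.1 = t₀ then (w (AtI t₀))⁻¹ else 0) = g t₀ * (w (AtI t₀))⁻¹ := fun g => by
    rw [sum_attach (Iset n k net.κ) fun t => g t * if t = t₀ then (w (AtI t₀))⁻¹ else 0]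
    simp [ht₀]
  refine ⟨fun t => if t.1 = t₀ then (w (AtI t₀))⁻¹ else 0,
    ⟨fun t => ?_, fun j => ?_, ?_⟩, ?_⟩
  · positivity
  · rw [hsum fun t => (aI t j : ℝ) * f j (Atj net t j) - (bI t j : ℝ) * f j (Atj net t j + 1)]
    exact mul_nonneg (hc j) (inv_nonneg.2 hA.le)
  · rw [hsum fun t => w (AtI t), mul_inv_cancel₀ hA.ne']
  · rw [primalObj, hsum fun t => w (BtI t), div_eq_mul_inv]

lemma one_mem_primalVals (hn : 1 ≤ n) (hw : IsBasis n w) : (1 : ℝ) ∈ PrimalVals n k net w f := by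
  set j₀ := net.cls ⟨0, hn⟩
  set t₀ : Idx n k := Pi.single j₀ (0, ⟨1, by omega⟩, 0)
  have ha : ∀ j, aI t₀ j = 0 := fun j => by by_cases h : j = j₀ <;> simp [t₀, aI, h]
  have hb : ∀ j, bI t₀ j = 0 := fun j => by by_cases h : j = j₀ <;> simp [t₀, bI, h]
  have hx : ∀ j, xI t₀ j = if j = j₀ then 1 else 0 := fun j => by
    by_cases h : j = j₀ <;> simp [t₀, xI, h]
  have hA : AtI t₀ = 1 := by simp [AtI, ha, hx]
  have hB : BtI t₀ = 1 := by simp [BtI, hb, hx]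
  have hmem : t₀ ∈ Iset n k net.κ := by
    simp only [Iset, mem_filter, mem_univ, true_and, ha, hb, hx, zero_add, add_zero]
    refine ⟨fun j => ?_, by simp, by simpa using hn⟩
    split_ifs with h
    · exact Nat.one_le_iff_ne_zero.2 (NeZero.ne _)
    · exact Nat.zero_le _
  have h := div_mem_primalVals_of_mem_Iset (f := f) hmem (by rw [hA]; exact hw.2 1 le_rfl hn)
    fun j => by simp [ha, hb]
  rwa [hA, hB, div_self (hw.2 1 le_rfl hn).ne'] at h

end PrimalLP

namespace Network

variable {n k : ℕ} (net : Network n k)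

/-- A cyclic shift of every class, each class `j` being numbered by `Fin (κ j)`. -/
abbrev Shift := ∀ j : Fin k, Fin (net.κ j)

noncomputable def classEquiv (j : Fin k) : net.classSet j ≃ Fin (net.κ j) :=
  (net.classSet j).equivFin

noncomputable def rank (i : Fin n) : Fin (net.κ (net.cls i)) :=
  (net.classEquiv (net.cls i)) ⟨i, net.mem_classSet.2 rfl⟩

noncomputable def pos (s : net.Shift) (i : Fin n) : ℕ := (net.rank i - s (net.cls i) : Fin _)

lemma pos_eq_of_cls_eq (s : net.Shift) {i : Fin n} {j : Fin k} (h : net.cls i = j) :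
    net.pos s i = ((net.classEquiv j) ⟨i, net.mem_classSet.2 h⟩ - s j : Fin _) := by
  subst h; rfl

lemma card_filter_pos_mem_Ico (s : net.Shift) (j : Fin k) {lo hi : ℕ} (h : hi ≤ net.κ j) :
    #{i ∈ net.classSet j | net.pos s i ∈ Ico lo hi} = hi - lo := by
  rw [← Fin.card_filter_val_sub_const_mem_Ico (s j) h]
  refine card_bij (fun i hi => (net.classEquiv j) ⟨i, (mem_filter.1 hi).1⟩) ?_ ?_ ?_
  · intro i hi
    obtain ⟨hij, hpos⟩ := mem_filter.1 hi
    rw [net.pos_eq_of_cls_eq s (net.mem_classSet.1 hij)] at hpos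
    exact mem_filter.2 ⟨mem_univ _, hpos⟩
  · intro i₁ _ i₂ _ h
    exact congrArg Subtype.val ((net.classEquiv j).injective h)
  · intro q hq
    refine ⟨((net.classEquiv j).symm q).1, mem_filter.2 ⟨Subtype.prop _, ?_⟩,
      Equiv.apply_symm_apply _ _⟩
    rw [net.pos_eq_of_cls_eq s (net.mem_classSet.1 (Subtype.prop _))]
    simpa using (mem_filter.1 hq).2

lemma sum_pos_mem_Ico (i : Fin n) {lo hi : ℕ} (h : hi ≤ net.κ (net.cls i)) (c : ℝ) :
    ∑ s : net.Shift, (if net.pos s i ∈ Ico lo hi then c else 0)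
      = (∏ l ∈ univ.erase (net.cls i), net.κ l : ℕ) * ((hi - lo : ℕ) * c) := by
  have hsum := Fintype.sum_pi_comp_eval (α := fun j => Fin (net.κ j)) (net.cls i)
    fun q => if ((net.rank i - q : Fin _) : ℕ) ∈ Ico lo hi then c else 0
  simp only [Fintype.card_fin] at hsum
  rw [show (∑ s : net.Shift, if net.pos s i ∈ Ico lo hi then c else 0) = _ from hsum, sum_ite,
    sum_const_zero, add_zero, sum_const, nsmul_eq_mul, Fin.card_filter_val_const_sub_mem_Ico _ h]

abbrev ShiftRes := {t // t ∈ Iset n k net.κ} × net.Shift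

lemma total_le_κ (t : {t // t ∈ Iset n k net.κ}) (j : Fin k) :
    aI t.1 j + xI t.1 j + bI t.1 j ≤ net.κ j :=
  (mem_filter.1 t.2).2.1 j

noncomputable def shiftDecode : Fin (Fintype.card net.ShiftRes) ≃ net.ShiftRes :=
  (Fintype.equivFin _).symm

noncomputable def shiftProfile (lo hi : Idx n k → Fin k → ℕ) (i : Fin n) :
    Finset (Fin (Fintype.card net.ShiftRes)) :=
  {r | net.pos (net.shiftDecode r).2 i ∈
    Ico (lo (net.shiftDecode r).1.1 (net.cls i)) (hi (net.shiftDecode r).1.1 (net.cls i))}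

noncomputable def shiftNe : Fin n → Finset (Fin (Fintype.card net.ShiftRes)) :=
  net.shiftProfile (fun _ _ => 0) fun t j => aI t j + xI t j

noncomputable def shiftOpt : Fin n → Finset (Fin (Fintype.card net.ShiftRes)) :=
  net.shiftProfile aI fun t j => aI t j + xI t j + bI t j

-- An `abbrev`, so that `(net.shiftGame θ hθ).m` unfolds to the type of `shiftNe` and `shiftOpt`.
noncomputable abbrev shiftGame (θ : {t // t ∈ Iset n k net.κ} → ℝ) (hθ : ∀ t, 0 ≤ θ t) :
    RAGame n where
  m := Fintype.card net.ShiftRes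
  v r := θ (net.shiftDecode r).1
  v_nonneg _ := hθ _
  act i := {net.shiftNe i, net.shiftOpt i}
  act_nonempty _ := insert_nonempty _ _

lemma sum_shiftDecode (g : {t // t ∈ Iset n k net.κ} → ℝ) :
    ∑ r, g (net.shiftDecode r).1
      = Fintype.card net.Shift * ∑ t ∈ (Iset n k net.κ).attach, g t := by
  rw [Equiv.sum_comp net.shiftDecode (fun ρ => g ρ.1), Fintype.sum_prod_type, ← univ_eq_attach,
    mul_sum]
  simp [mul_comm]

lemma sum_shiftProfile (lo hi : Idx n k → Fin k → ℕ) (i : Fin n)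
    (h : ∀ t : {t // t ∈ Iset n k net.κ}, hi t.1 (net.cls i) ≤ net.κ (net.cls i))
    (g : {t // t ∈ Iset n k net.κ} → ℝ) :
    ∑ r ∈ net.shiftProfile lo hi i, g (net.shiftDecode r).1
      = (∏ l ∈ univ.erase (net.cls i), net.κ l : ℕ)
        * ∑ t ∈ (Iset n k net.κ).attach, (hi t.1 (net.cls i) - lo t.1 (net.cls i) : ℕ) * g t := by
  rw [shiftProfile, sum_filter, Equiv.sum_comp net.shiftDecode fun ρ : net.ShiftRes =>
      if net.pos ρ.2 i ∈ Ico (lo ρ.1.1 (net.cls i)) (hi ρ.1.1 (net.cls i)) then g ρ.1 else 0,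
    Fintype.sum_prod_type, mul_sum]
  exact sum_congr (univ_eq_attach _) fun t _ =>
    net.sum_pos_mem_Ico i (lo := lo t.1 (net.cls i)) (h t) (g t)

section ShiftGame

variable {θ : {t // t ∈ Iset n k net.κ} → ℝ} (hθ : ∀ t, 0 ≤ θ t)

lemma cnt_shiftProfile_classSet {lo hi : Idx n k → Fin k → ℕ} (j : Fin k)
    (r : Fin (Fintype.card net.ShiftRes)) (h : hi (net.shiftDecode r).1.1 j ≤ net.κ j) :
    (net.shiftGame θ hθ).cnt (net.shiftProfile lo hi) (net.classSet j) r
      = hi (net.shiftDecode r).1.1 j - lo (net.shiftDecode r).1.1 j := by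
  change #{i ∈ net.classSet j | r ∈ net.shiftProfile lo hi i} = _
  rw [← net.card_filter_pos_mem_Ico (net.shiftDecode r).2 j h]
  refine congrArg card (filter_congr fun i hij => ?_)
  simp [shiftProfile, net.mem_classSet.1 hij]

lemma cnt_shiftNe_classSet (j : Fin k) (r : Fin (Fintype.card net.ShiftRes)) :
    (net.shiftGame θ hθ).cnt net.shiftNe (net.classSet j) r
      = aI (net.shiftDecode r).1.1 j + xI (net.shiftDecode r).1.1 j := by
  have := net.total_le_κ (net.shiftDecode r).1 j
  rw [shiftNe, cnt_shiftProfile_classSet _ _ _ _ (by omega), Nat.sub_zero]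

lemma cnt_shiftOpt_classSet (j : Fin k) (r : Fin (Fintype.card net.ShiftRes)) :
    (net.shiftGame θ hθ).cnt net.shiftOpt (net.classSet j) r
      = bI (net.shiftDecode r).1.1 j + xI (net.shiftDecode r).1.1 j := by
  have := net.total_le_κ (net.shiftDecode r).1 j
  rw [shiftOpt, cnt_shiftProfile_classSet _ _ _ _ (by omega)]
  omega

lemma cnt_shiftNe_univ (r : Fin (Fintype.card net.ShiftRes)) :
    (net.shiftGame θ hθ).cnt net.shiftNe univ r = AtI (net.shiftDecode r).1.1 := by
  rw [RAGame.cnt_univ_eq_sum_cnt_classSet _ net]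
  exact sum_congr rfl fun j _ => net.cnt_shiftNe_classSet hθ j r

lemma cnt_shiftOpt_univ (r : Fin (Fintype.card net.ShiftRes)) :
    (net.shiftGame θ hθ).cnt net.shiftOpt univ r = BtI (net.shiftDecode r).1.1 := by
  rw [RAGame.cnt_univ_eq_sum_cnt_classSet _ net]
  exact sum_congr rfl fun j _ => net.cnt_shiftOpt_classSet hθ j r

lemma cnt_shiftNe_Nb (j : Fin k) (r : Fin (Fintype.card net.ShiftRes)) :
    (net.shiftGame θ hθ).cnt net.shiftNe (net.Nb j) r = Atj net (net.shiftDecode r).1.1 j := by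
  rw [RAGame.cnt_Nb_eq_sum_cnt_classSet _ net]
  exact sum_congr rfl fun l _ => net.cnt_shiftNe_classSet hθ l r

lemma welf_shiftNe (w : ℕ → ℝ) :
    (net.shiftGame θ hθ).welf w net.shiftNe
      = Fintype.card net.Shift * ∑ t ∈ (Iset n k net.κ).attach, w (AtI t.1) * θ t := by
  simp only [RAGame.welf, cnt_shiftNe_univ]
  rw [← net.sum_shiftDecode fun t => w (AtI t.1) * θ t]
  exact sum_congr rfl fun r _ => mul_comm _ _

lemma welf_shiftOpt (w : ℕ → ℝ) :
    (net.shiftGame θ hθ).welf w net.shiftOpt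
      = Fintype.card net.Shift * primalObj n k net.κ w θ := by
  simp only [RAGame.welf, cnt_shiftOpt_univ]
  rw [primalObj, ← net.sum_shiftDecode fun t => w (BtI t.1) * θ t]
  exact sum_congr rfl fun r _ => mul_comm _ _

lemma shiftNe_sdiff_shiftOpt (i : Fin n) :
    net.shiftNe i \ net.shiftOpt i = net.shiftProfile (fun _ _ => 0) aI i := by
  ext r; simp only [shiftNe, shiftOpt, shiftProfile, mem_sdiff, mem_filter, mem_univ, true_and,
    mem_Ico]; omega

lemma shiftOpt_sdiff_shiftNe (i : Fin n) :
    net.shiftOpt i \ net.shiftNe i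
      = net.shiftProfile (fun t j => aI t j + xI t j) (fun t j => aI t j + xI t j + bI t j) i := by
  ext r; simp only [shiftNe, shiftOpt, shiftProfile, mem_sdiff, mem_filter, mem_univ, true_and,
    mem_Ico]; omega

lemma util_shiftNe_sub_util_update (f : Fin k → ℕ → ℝ) (i : Fin n) :
    (net.shiftGame θ hθ).util net f net.shiftNe i
        - (net.shiftGame θ hθ).util net f (Function.update net.shiftNe i (net.shiftOpt i)) i
      = (∏ l ∈ univ.erase (net.cls i), net.κ l : ℕ) * ∑ t ∈ (Iset n k net.κ).attach,
          ((aI t.1 (net.cls i) : ℝ) * f (net.cls i) (Atj net t.1 (net.cls i))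
            - (bI t.1 (net.cls i) : ℝ) * f (net.cls i) (Atj net t.1 (net.cls i) + 1)) * θ t := by
  rw [RAGame.util_sub_util_update, shiftNe_sdiff_shiftOpt, shiftOpt_sdiff_shiftNe]
  simp only [cnt_shiftNe_Nb]
  rw [net.sum_shiftProfile _ _ i (fun t => by have := net.total_le_κ t (net.cls i); omega)
      fun t => θ t * f (net.cls i) (Atj net t.1 (net.cls i)),
    net.sum_shiftProfile _ _ i (fun t => net.total_le_κ t (net.cls i))
      fun t => θ t * f (net.cls i) (Atj net t.1 (net.cls i) + 1),
    ← mul_sub, ← sum_sub_distrib]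
  congr 1
  refine sum_congr rfl fun t _ => ?_
  rw [Nat.sub_zero, Nat.add_sub_cancel_left]
  ring

lemma isNash_shiftNe {w : ℕ → ℝ} {f : Fin k → ℕ → ℝ} (hfeas : PrimalFeasible n k net w f θ) :
    (net.shiftGame θ hfeas.1).IsNash net f net.shiftNe := by
  refine ⟨fun i => mem_insert_self _ _, fun i b hb => ?_⟩
  rcases mem_insert.1 hb with rfl | hb
  · rw [Function.update_eq_self]
  · rw [mem_singleton.1 hb, ← sub_nonneg, util_shiftNe_sub_util_update]
    exact mul_nonneg (Nat.cast_nonneg _) (hfeas.2.1 _)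

end ShiftGame

end Network
namespace RAGame

variable {n k : ℕ} (G : RAGame n) {w : ℕ → ℝ} {net : Network n k} {f : Fin k → ℕ → ℝ}

lemma bddAbove_welf : BddAbove {x | ∃ a, G.IsProfile a ∧ x = G.welf w a} :=
  ((Set.finite_range (G.welf w)).subset (by rintro _ ⟨a, -, rfl⟩; exact ⟨a, rfl⟩)).bddAbove

lemma gameRatio_le_div (hw : IsBasis n w) {ane aopt : Fin n → Finset (Fin G.m)}
    (hne : G.IsNash net f ane) (hopt : G.IsProfile aopt) (hpos : 0 < G.welf w aopt) :
    gameRatio G w net f ≤ G.welf w ane / G.welf w aopt :=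
  div_le_div₀ (G.welf_nonneg hw ane)
    (csInf_le ⟨0, by rintro _ ⟨a, -, rfl⟩; exact G.welf_nonneg hw a⟩ ⟨ane, hne, rfl⟩) hpos
    (le_csSup G.bddAbove_welf ⟨aopt, hopt, rfl⟩)

lemma one_div_le_gameRatio (hw : IsBasis n w) (hfpos : ∀ j, 0 < f j 1)
    (hbdd : BddAbove (PrimalVals n k net w f)) (hW : 0 < sSup (PrimalVals n k net w f))
    (hG : GoodGame G w) (hN : ∃ a, G.IsNash net f a) :
    1 / sSup (PrimalVals n k net w f) ≤ gameRatio G w net f := by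
  obtain ⟨a₀, ha₀, hpos⟩ := hG
  set P := sSup {x | ∃ a, G.IsProfile a ∧ x = G.welf w a}
  have hP : 0 < P := hpos.trans_le (le_csSup G.bddAbove_welf ⟨a₀, ha₀, rfl⟩)
  have hbound : P / sSup (PrimalVals n k net w f)
      ≤ sInf {x | ∃ a, G.IsNash net f a ∧ x = G.welf w a} := by
    obtain ⟨a, ha⟩ := hN
    refine le_csInf ⟨_, a, ha, rfl⟩ ?_
    rintro _ ⟨ane, hne, rfl⟩
    have hne_pos := G.welf_pos_of_isNash hw hfpos ⟨a₀, ha₀, hpos⟩ hne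
    rw [div_le_iff₀ hW]
    refine csSup_le ⟨_, a₀, ha₀, rfl⟩ ?_
    rintro _ ⟨aopt, hopt, rfl⟩
    have := le_csSup hbdd (G.div_welf_mem_primalVals hw.1 hne hopt hne_pos)
    rwa [div_le_iff₀ hne_pos, mul_comm] at this
  calc 1 / sSup (PrimalVals n k net w f) = P / sSup (PrimalVals n k net w f) / P := by
        field_simp
    _ ≤ gameRatio G w net f := div_le_div_of_nonneg_right hbound hP.le

end RAGame

lemma exists_gameRatio_le {n k : ℕ} {w : ℕ → ℝ} {net : Network n k} {f : Fin k → ℕ → ℝ}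
    (hw : IsBasis n w) {x : ℝ} (hx : x ∈ PrimalVals n k net w f) (hx0 : 0 < x) :
    ∃ G : RAGame n, GoodGame G w ∧ (∃ a, G.IsNash net f a) ∧ gameRatio G w net f ≤ 1 / x := by
  obtain ⟨θ, hθ, rfl⟩ := hx
  have hK : 0 < (Fintype.card net.Shift : ℝ) := by exact_mod_cast Fintype.card_pos
  have hne : (net.shiftGame θ hθ.1).welf w net.shiftNe = Fintype.card net.Shift := by
    rw [net.welf_shiftNe, hθ.2.2, mul_one]
  have hopt := net.welf_shiftOpt hθ.1 w
  refine ⟨net.shiftGame θ hθ.1, ⟨net.shiftNe, fun i => mem_insert_self _ _, hne ▸ hK⟩,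
    ⟨_, net.isNash_shiftNe hθ⟩, ?_⟩
  calc gameRatio (net.shiftGame θ hθ.1) w net f
      ≤ (net.shiftGame θ hθ.1).welf w net.shiftNe / (net.shiftGame θ hθ.1).welf w net.shiftOpt :=
        RAGame.gameRatio_le_div _ hw (net.isNash_shiftNe hθ)
          (fun i => mem_insert_of_mem (mem_singleton_self _)) (by rw [hopt]; positivity)
    _ = 1 / primalObj n k net.κ w θ := by
        rw [hne, hopt]; field_simp

theorem poa_eq_inv_primal_general {n k : ℕ} (hn : 1 ≤ n) (w : ℕ → ℝ) (hw : IsBasis n w)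
    (net : Network n k) (f : Fin k → ℕ → ℝ)
    (hfpos : ∀ j, 0 < f j 1) :
    (PrimalVals n k net w f).Nonempty ∧ BddAbove (PrimalVals n k net w f) ∧
      PoA n w net f = 1 / sSup (PrimalVals n k net w f) := by
  have hone : (1 : ℝ) ∈ PrimalVals n k net w f := one_mem_primalVals hn hw
  have hbdd : BddAbove (PrimalVals n k net w f) := bddAbove_primalVals hw hfpos
  have hW : 0 < sSup (PrimalVals n k net w f) := one_pos.trans_le (le_csSup hbdd hone)
  refine ⟨⟨1, hone⟩, hbdd, csInf_eq_one_div_csSup hbdd hone one_pos ?_ ?_⟩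
  · rintro _ ⟨G, hG, hN, rfl⟩
    exact G.one_div_le_gameRatio hw hfpos hbdd hW hG hN
  · intro x hx hx0
    obtain ⟨G, hG, hN, hle⟩ := exists_gameRatio_le hw hx hx0
    exact ⟨_, ⟨G, hG, hN, rfl⟩, hle⟩

/-- Theorem 1: if `f_j(1) > 0` for all `j`, the primal LP value `W*` is finite
and `PoA = 1/W*`. -/
theorem poa_eq_inv_primal {n k : ℕ} (hn : 1 ≤ n) (w : ℕ → ℝ) (hw : IsBasis n w)
    (net : Network n k) (f : Fin k → ℕ → ℝ) (hf : IsMech net f)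
    (hfpos : ∀ j, 0 < f j 1) :
    (PrimalVals n k net w f).Nonempty ∧ BddAbove (PrimalVals n k net w f) ∧
      PoA n w net f = 1 / sSup (PrimalVals n k net w f) :=
  poa_eq_inv_primal_general hn w hw net f hfpos
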